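/- Let G be a group and N a perfect normal subgroup of G (i.e. N = [N,N]) which has a complement in G. Then the sequence J(N) → J(G) → J(G/N) → 1 is exact, where the first map is the restriction to J(N) of the homomorphism N ⊗ N → G ⊗ G induced by the inclusion N → G, and the second map is the restriction to J(G) of the homomorphism G ⊗ G → (G/N) ⊗ (G/N) induced by the quotient map G → G/N; that is, the second map is surjective and its kernel equals the image of the first map. (Topologically this is the exact sequence π₃(SK(N,1)) → π₃(SK(G,1)) → π₃(SK(G/N,1)) → 0.) -/

import Mathlib

/- Nonabelian tensor square framework (Brown–Loday). -/

namespace NATensor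

variable (G : Type*) [Group G]

/-- The relator set for the nonabelian tensor square of `G`:
`g g' ⊗ h = (ᵍg' ⊗ ᵍh)(g ⊗ h)` and `g ⊗ h h' = (g ⊗ h)(ʰg ⊗ ʰh')`. -/
def rels : Set (FreeGroup (G × G)) :=
  {r | (∃ g g' h : G,
          r = FreeGroup.of (g * g', h) *
              (FreeGroup.of (g * g' * g⁻¹, g * h * g⁻¹) * FreeGroup.of (g, h))⁻¹) ∨
       (∃ g h h' : G,
          r = FreeGroup.of (g, h * h') *
              (FreeGroup.of (g, h) * FreeGroup.of (h * g * h⁻¹, h * h' * h⁻¹))⁻¹)}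

/-- The nonabelian tensor square `G ⊗ G`. -/
abbrev TS := PresentedGroup (rels G)

variable {G}

/-- The generator `g ⊗ h` of the nonabelian tensor square. -/
def tmul (g h : G) : TS G := PresentedGroup.of (g, h)

lemma mk_rel_eq_one {r : FreeGroup (G × G)} (hr : r ∈ rels G) :
    (PresentedGroup.mk (rels G) r : TS G) = 1 :=
  (QuotientGroup.eq_one_iff r).mpr (Subgroup.subset_normalClosure hr)

lemma tmul_rel₁ (g g' h : G) :
    tmul (g * g') h = tmul (g * g' * g⁻¹) (g * h * g⁻¹) * tmul g h := by
  have h1 := mk_rel_eq_one (G := G) (Or.inl ⟨g, g', h, rfl⟩)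
  simp only [map_mul, map_inv, mul_inv_eq_one] at h1
  exact h1

lemma tmul_rel₂ (g h h' : G) :
    tmul g (h * h') = tmul g h * tmul (h * g * h⁻¹) (h * h' * h⁻¹) := by
  have h1 := mk_rel_eq_one (G := G) (Or.inr ⟨g, h, h', rfl⟩)
  simp only [map_mul, map_inv, mul_inv_eq_one] at h1
  exact h1

variable (G)

/-- The homomorphism `κ : G ⊗ G → G`, `g ⊗ h ↦ [g,h] = g h g⁻¹ h⁻¹` (its image is `[G,G]`). -/
def kappa : TS G →* G :=
  PresentedGroup.toGroup (f := fun x : G × G => x.1 * x.2 * x.1⁻¹ * x.2⁻¹) (by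
    rintro r (⟨g, g', h, rfl⟩ | ⟨g, h, h', rfl⟩) <;>
      simp only [map_mul, map_inv, FreeGroup.lift_apply_of] <;> group)

variable {G}

@[simp] lemma kappa_tmul (g h : G) : kappa G (tmul g h) = g * h * g⁻¹ * h⁻¹ :=
  PresentedGroup.toGroup.of _

variable (G)

/-- `J(G) = ker κ ≅ π₃(SK(G,1))`. -/
def J : Subgroup (TS G) := (kappa G).ker

/-- `∇(G)`: the (normal) subgroup of `G ⊗ G` generated by the elements `x ⊗ x`. -/
def nabla : Subgroup (TS G) :=
  Subgroup.normalClosure {t | ∃ x : G, t = tmul x x}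

/-- `Δ(G)`: the (normal) subgroup of `G ⊗ G` generated by the `(x ⊗ y)(y ⊗ x)`. -/
def delta : Subgroup (TS G) :=
  Subgroup.normalClosure {t | ∃ x y : G, t = tmul x y * tmul y x}

instance : (nabla G).Normal := Subgroup.normalClosure_normal

instance : (delta G).Normal := Subgroup.normalClosure_normal

/-- The exterior square `G ∧ G = (G ⊗ G)/∇(G)`. -/
abbrev ES := TS G ⧸ nabla G

/-- The symmetric square `G ⊗̃ G = (G ⊗ G)/Δ(G)`. -/
abbrev SS := TS G ⧸ delta G

variable {G}

/-- The element `g ∧ h` of the exterior square. -/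
def emul (g h : G) : ES G := QuotientGroup.mk' (nabla G) (tmul g h)

/-- The image of `g ⊗ h` in the symmetric square. -/
def smul (g h : G) : SS G := QuotientGroup.mk' (delta G) (tmul g h)

variable {H : Type*} [Group H]

/-- The induced homomorphism `G ⊗ G → H ⊗ H` of a homomorphism `f : G → H`. -/
def tmap (f : G →* H) : TS G →* TS H :=
  PresentedGroup.toGroup (f := fun x : G × G => tmul (f x.1) (f x.2)) (by
    rintro r (⟨g, g', h, rfl⟩ | ⟨g, h, h', rfl⟩) <;>
      simp only [map_mul, map_inv, FreeGroup.lift_apply_of, mul_inv_eq_one]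
    · rw [tmul_rel₁]
    · rw [tmul_rel₂])

@[simp] lemma tmap_tmul (f : G →* H) (g h : G) :
    tmap f (tmul g h) = tmul (f g) (f h) :=
  PresentedGroup.toGroup.of _

lemma nabla_le_comap_nabla (f : G →* H) :
    nabla G ≤ MonoidHom.ker ((QuotientGroup.mk' (nabla H)).comp (tmap f)) := by
  refine Subgroup.normalClosure_le_normal ?_
  rintro _ ⟨y, rfl⟩
  simp only [SetLike.mem_coe, MonoidHom.mem_ker, MonoidHom.comp_apply, tmap_tmul,
    QuotientGroup.mk'_apply, QuotientGroup.eq_one_iff]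
  exact Subgroup.subset_normalClosure ⟨f y, rfl⟩

lemma delta_le_comap_delta (f : G →* H) :
    delta G ≤ MonoidHom.ker ((QuotientGroup.mk' (delta H)).comp (tmap f)) := by
  refine Subgroup.normalClosure_le_normal ?_
  rintro _ ⟨x, y, rfl⟩
  simp only [SetLike.mem_coe, MonoidHom.mem_ker, MonoidHom.comp_apply, map_mul, tmap_tmul,
    QuotientGroup.mk'_apply, ← QuotientGroup.mk_mul, QuotientGroup.eq_one_iff]
  exact Subgroup.subset_normalClosure ⟨f x, f y, rfl⟩

/-- The induced homomorphism `G ∧ G → H ∧ H` of a homomorphism `f : G → H`. -/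
def emap (f : G →* H) : ES G →* ES H :=
  QuotientGroup.lift (nabla G) ((QuotientGroup.mk' (nabla H)).comp (tmap f))
    (fun x hx => MonoidHom.mem_ker.mp (nabla_le_comap_nabla f hx))

@[simp] lemma emap_emul (f : G →* H) (g h : G) :
    emap f (emul g h) = emul (f g) (f h) := by
  change QuotientGroup.mk' (nabla H) (tmap f (tmul g h)) = _
  rw [tmap_tmul]
  rfl

/-- The induced homomorphism `G ⊗̃ G → H ⊗̃ H` of a homomorphism `f : G → H`. -/
def smap (f : G →* H) : SS G →* SS H :=
  QuotientGroup.lift (delta G) ((QuotientGroup.mk' (delta H)).comp (tmap f))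
    (fun x hx => MonoidHom.mem_ker.mp (delta_le_comap_delta f hx))

variable (G)

lemma nabla_le_ker_kappa : nabla G ≤ (kappa G).ker := by
  refine Subgroup.normalClosure_le_normal ?_
  rintro _ ⟨x, rfl⟩
  simp only [SetLike.mem_coe, MonoidHom.mem_ker, kappa_tmul]
  group

/-- The homomorphism `κ' : G ∧ G → G`, `g ∧ h ↦ [g,h]` (its image is `[G,G]`). -/
def kappa' : ES G →* G :=
  QuotientGroup.lift (nabla G) (kappa G)
    (fun x hx => MonoidHom.mem_ker.mp (nabla_le_ker_kappa G hx))

/-- The Schur multiplier `M(G) = ker κ' ≅ H₂(G)`. -/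
def M : Subgroup (ES G) := (kappa' G).ker

/-- `J̃(G) = J(G)/Δ(G) ≅ π₂ˢ(K(G,1))`, realized as the image of `J(G)` in `G ⊗̃ G`. -/
def Jt : Subgroup (SS G) := Subgroup.map (QuotientGroup.mk' (delta G)) (J G)

/-- `∇(G)/Δ(G)`, realized as the image of `∇(G)` in `G ⊗̃ G`. -/
def nablaBar : Subgroup (SS G) := Subgroup.map (QuotientGroup.mk' (delta G)) (nabla G)

end NATensor

/-
A complement `B` of `N` yields a section `σ` of `π : G → G/N`, so `π ⊗ π` is split surjective
and, `κ` being natural, maps `J(G)` onto `J(G/N)`.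

For the kernel, let `E ⊆ G ⊗ G` be the image of `N ⊗ N`. Conjugation by `g ⊗ h` acts as `[g,h]`,
so `E` is normal and, modulo `E`, commutators of elements of `N` act trivially; `N` being perfect,
all of `N` does. Then `n ↦ g ⊗ n` and `n ↦ n ⊗ g` are homomorphisms `N → (G ⊗ G)/E` with commuting
values, hence trivial, again by perfectness. So `g ⊗ h` modulo `E` depends only on `gN` and `hN`,
and `t ≡ (σπ ⊗ σπ)(t) = 1` modulo `E` for `t` in the kernel of `π ⊗ π`. Finally `N → G` is
injective, so an element of `E ∩ J(G)` comes from `J(N)`.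
-/

section GroupTheory

open scoped commutatorElement

variable {G M : Type*} [Group G] [Group M]

lemma subgroup_le_of_perfect {N K : Subgroup G} (hperf : commutator ↥N = ⊤)
    (hK : ∀ a ∈ N, ∀ b ∈ N, ⁅a, b⁆ ∈ K) : N ≤ K :=
  calc N = (commutator ↥N).map N.subtype := by
        rw [hperf, ← MonoidHom.range_eq_map, Subgroup.range_subtype]
    _ = ⁅N, N⁆ := by
        rw [commutator_def, Subgroup.map_commutator, ← MonoidHom.range_eq_map,
          Subgroup.range_subtype]
    _ ≤ K := Subgroup.commutator_le.mpr hK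

lemma MonoidHom.eq_one_of_perfect_of_commute {P : Type*} [Group P]
    (hperf : commutator P = ⊤) (f : P →* M) (hf : ∀ a b, Commute (f a) (f b)) : f = 1 := by
  suffices commutator P ≤ f.ker by
    ext x
    exact this (hperf ▸ Subgroup.mem_top x)
  rw [commutator_def, Subgroup.commutator_le]
  intro a _ b _
  rw [MonoidHom.mem_ker, map_commutatorElement, commutatorElement_eq_one_iff_commute]
  exact hf a b

lemma exists_mk'_comp_eq_id_of_complement (N : Subgroup G) [N.Normal] (B : Subgroup G)
    (hB1 : N ⊔ B = ⊤) (hB2 : N ⊓ B = ⊥) :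
    ∃ σ : G ⧸ N →* G, (QuotientGroup.mk' N).comp σ = MonoidHom.id _ := by
  have hB : B.IsComplement' N := by
    refine Subgroup.isComplement'_of_disjoint_and_mul_eq_univ ?_ ?_
    · rw [disjoint_iff, inf_comm, hB2]
    · rw [← Subgroup.mul_normal, sup_comm, hB1, Subgroup.coe_top]
  refine ⟨B.subtype.comp hB.QuotientMulEquiv.toMonoidHom, ?_⟩
  ext q
  simpa using hB.quotientGroupMk_leftQuotientEquiv q

end GroupTheory

namespace NATensor

open scoped commutatorElement

variable {G H K : Type*} [Group G] [Group H] [Group K]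

section Functoriality

lemma hom_ext {f f' : TS G →* H} (h : ∀ a b : G, f (tmul a b) = f' (tmul a b)) : f = f' :=
  PresentedGroup.ext fun x => h x.1 x.2

lemma tmul_one_left (h : G) : tmul 1 h = 1 := by
  simpa using tmul_rel₁ (1 : G) 1 h

lemma tmul_one_right (g : G) : tmul g 1 = 1 := by
  simpa using tmul_rel₂ g (1 : G) 1

lemma tmap_comp (f : H →* K) (f' : G →* H) : tmap (f.comp f') = (tmap f).comp (tmap f') :=
  hom_ext fun a b => by simp

lemma tmap_id : tmap (MonoidHom.id G) = MonoidHom.id (TS G) :=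
  hom_ext fun a b => by simp

lemma tmap_one : tmap (1 : G →* H) = 1 :=
  hom_ext fun a b => by simp [tmul_one_left]

lemma kappa_comp_tmap (f : G →* H) : (kappa H).comp (tmap f) = f.comp (kappa G) :=
  hom_ext fun a b => by simp

lemma map_J_le (f : G →* H) : (J G).map (tmap f) ≤ J H := by
  rintro _ ⟨t, ht, rfl⟩
  change kappa H (tmap f t) = 1
  rw [← MonoidHom.comp_apply, kappa_comp_tmap, MonoidHom.comp_apply, ht, map_one]

lemma tmap_mem_J_iff {f : G →* H} (hf : Function.Injective f) {t : TS G} :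
    tmap f t ∈ J H ↔ t ∈ J G := by
  change kappa H (tmap f t) = 1 ↔ kappa G t = 1
  rw [← MonoidHom.comp_apply, kappa_comp_tmap, MonoidHom.comp_apply, map_eq_one_iff f hf]

lemma map_J_eq_of_comp_eq_id (f : G →* H) (s : H →* G) (hfs : f.comp s = MonoidHom.id H) :
    (J G).map (tmap f) = J H := by
  refine le_antisymm (map_J_le f) fun t ht => ⟨tmap s t, map_J_le s ⟨t, ht, rfl⟩, ?_⟩
  rw [← MonoidHom.comp_apply, ← tmap_comp, hfs, tmap_id, MonoidHom.id_apply]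

end Functoriality

section Action

def conjMap (x : G) : TS G →* TS G := tmap (MulAut.conj x).toMonoidHom

@[simp] lemma conjMap_tmul (x g h : G) :
    conjMap x (tmul g h) = tmul (x * g * x⁻¹) (x * h * x⁻¹) := by
  simp [conjMap]

lemma conjMap_mul (x y : G) : conjMap (x * y) = (conjMap x).comp (conjMap y) :=
  hom_ext fun a b => by simp [mul_assoc]

lemma conjMap_one : conjMap (1 : G) = MonoidHom.id (TS G) :=
  hom_ext fun a b => by simp

lemma tmul_mul_left (g g' h : G) : tmul (g * g') h = conjMap g (tmul g' h) * tmul g h := by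
  rw [tmul_rel₁, conjMap_tmul]

lemma tmul_mul_right (g h h' : G) : tmul g (h * h') = tmul g h * conjMap h (tmul g h') := by
  rw [tmul_rel₂, conjMap_tmul]

lemma conjMap_mul_tmul_comm (g h x y : G) :
    conjMap (g * h) (tmul x y) * tmul g h = tmul g h * conjMap (h * g) (tmul x y) := by
  have expand₁ : tmul (g * x) (h * y) =
      conjMap g (tmul x h) * (conjMap (g * h) (tmul x y) * tmul g h) * conjMap h (tmul g y) := by
    rw [tmul_mul_left, tmul_mul_right x, tmul_mul_right g, map_mul, conjMap_mul]
    simp only [MonoidHom.comp_apply, mul_assoc]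
  have expand₂ : tmul (g * x) (h * y) =
      conjMap g (tmul x h) * (tmul g h * conjMap (h * g) (tmul x y)) * conjMap h (tmul g y) := by
    rw [tmul_mul_right, tmul_mul_left g x h, tmul_mul_left g x y, map_mul, conjMap_mul]
    simp only [MonoidHom.comp_apply, mul_assoc]
  exact mul_left_cancel (mul_right_cancel (expand₁.symm.trans expand₂))

lemma tmul_mul_mul_inv_eq_conjMap (g h : G) (t : TS G) :
    tmul g h * t * (tmul g h)⁻¹ = conjMap ⁅g, h⁆ t := by
  suffices (MulAut.conj (tmul g h)).toMonoidHom = conjMap ⁅g, h⁆ from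
    DFunLike.congr_fun this t
  refine hom_ext fun a b => ?_
  have key := conjMap_mul_tmul_comm g h ((h * g)⁻¹ * a * (h * g)) ((h * g)⁻¹ * b * (h * g))
  simp only [conjMap_tmul] at key
  rw [MulEquiv.coe_toMonoidHom, MulAut.conj_apply, conjMap_tmul, mul_inv_eq_iff_eq_mul,
    commutatorElement_def]
  convert key.symm using 3 <;> group

end Action

section Image

variable (N : Subgroup G)

def tensorImage : Subgroup (TS G) := (tmap N.subtype).range

variable {N}

lemma tmul_mem_tensorImage {a b : G} (ha : a ∈ N) (hb : b ∈ N) : tmul a b ∈ tensorImage N :=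
  ⟨tmul ⟨a, ha⟩ ⟨b, hb⟩, tmap_tmul _ _ _⟩

lemma conjMap_mem_tensorImage [N.Normal] (x : G) {t : TS G} (ht : t ∈ tensorImage N) :
    conjMap x t ∈ tensorImage N := by
  obtain ⟨u, rfl⟩ := ht
  refine ⟨tmap (MulAut.conjNormal x).toMonoidHom u, ?_⟩
  have hcomm : N.subtype.comp (MulAut.conjNormal x).toMonoidHom =
      (MulAut.conj x).toMonoidHom.comp N.subtype := by
    ext n
    simp
  rw [← MonoidHom.comp_apply, ← tmap_comp, hcomm, tmap_comp]
  rfl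

lemma normal_of_conjMap_mem {S : Subgroup (TS G)} (hS : ∀ x t, t ∈ S → conjMap x t ∈ S) :
    S.Normal := by
  rw [← Subgroup.normalizer_eq_top_iff, eq_top_iff, ← PresentedGroup.closure_range_of,
    Subgroup.closure_le]
  rintro _ ⟨⟨g, h⟩, rfl⟩
  refine Subgroup.mem_normalizer_iff.mpr fun t => ?_
  change t ∈ S ↔ tmul g h * t * (tmul g h)⁻¹ ∈ S
  rw [tmul_mul_mul_inv_eq_conjMap]
  refine ⟨hS _ t, fun ht => ?_⟩
  have h' := hS ⁅g, h⁆⁻¹ _ ht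
  rwa [← MonoidHom.comp_apply, ← conjMap_mul, inv_mul_cancel, conjMap_one,
    MonoidHom.id_apply] at h'

instance [N.Normal] : (tensorImage N).Normal :=
  normal_of_conjMap_mem fun x _ => conjMap_mem_tensorImage x

end Image

section Perfect

variable {N : Subgroup G} [N.Normal]

lemma mk_comp_conjMap_of_mem (hperf : commutator ↥N = ⊤) {x : G} (hx : x ∈ N) :
    (QuotientGroup.mk' (tensorImage N)).comp (conjMap x) = QuotientGroup.mk' _ := by
  let fixer : Subgroup G :=
    { carrier := {y | (QuotientGroup.mk' (tensorImage N)).comp (conjMap y) = QuotientGroup.mk' _}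
      mul_mem' := fun {y z} hy hz => by
        change _ = _ at hy hz ⊢
        rw [conjMap_mul, ← MonoidHom.comp_assoc, hy, hz]
      one_mem' := by
        change _ = _
        rw [conjMap_one, MonoidHom.comp_id]
      inv_mem' := fun {y} hy => by
        change _ = _ at hy ⊢
        nth_rw 1 [← hy]
        rw [MonoidHom.comp_assoc, ← conjMap_mul, mul_inv_cancel, conjMap_one,
          MonoidHom.comp_id] }
  refine subgroup_le_of_perfect (K := fixer) hperf (fun a ha b hb => ?_) hx
  refine hom_ext fun c d => ?_
  have hab : QuotientGroup.mk' (tensorImage N) (tmul a b) = 1 :=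
    (QuotientGroup.eq_one_iff _).mpr (tmul_mem_tensorImage ha hb)
  rw [MonoidHom.comp_apply, ← tmul_mul_mul_inv_eq_conjMap, map_mul, map_mul, map_inv, hab]
  group

lemma commute_mk_tmul (hperf : commutator ↥N = ⊤) {g h : G} (hgh : ⁅g, h⁆ ∈ N) (t : TS G) :
    Commute (tmul g h : TS G ⧸ tensorImage N) t := by
  rw [commute_iff_eq, ← mul_inv_eq_iff_eq_mul, ← QuotientGroup.mk_inv, ← QuotientGroup.mk_mul,
    ← QuotientGroup.mk_mul, tmul_mul_mul_inv_eq_conjMap]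
  exact DFunLike.congr_fun (mk_comp_conjMap_of_mem hperf hgh) t

lemma tmul_mem_tensorImage_of_mem_right (hperf : commutator ↥N = ⊤) (g : G) {n : G}
    (hn : n ∈ N) : tmul g n ∈ tensorImage N := by
  let f : ↥N →* TS G ⧸ tensorImage N :=
    { toFun := fun m => (tmul g m : TS G ⧸ tensorImage N)
      map_one' := by simp [tmul_one_right]
      map_mul' := fun a b => by
        simp only [Subgroup.coe_mul, tmul_mul_right, QuotientGroup.mk_mul]
        exact congrArg _ (DFunLike.congr_fun (mk_comp_conjMap_of_mem hperf a.2) _) }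
  have hf : f = 1 := f.eq_one_of_perfect_of_commute hperf fun a _ =>
    commute_mk_tmul hperf (Subgroup.commutator_le_right ⊤ N
      (Subgroup.commutator_mem_commutator (Subgroup.mem_top g) a.2)) _
  exact (QuotientGroup.eq_one_iff _).mp (DFunLike.congr_fun hf ⟨n, hn⟩)

lemma tmul_mem_tensorImage_of_mem_left (hperf : commutator ↥N = ⊤) {n : G} (hn : n ∈ N)
    (g : G) : tmul n g ∈ tensorImage N := by
  have hcomm (a b : ↥N) : Commute (tmul (a : G) g : TS G ⧸ tensorImage N) (tmul (b : G) g) :=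
    commute_mk_tmul hperf (Subgroup.commutator_le_left N ⊤
      (Subgroup.commutator_mem_commutator a.2 (Subgroup.mem_top g))) _
  let f : ↥N →* TS G ⧸ tensorImage N :=
    { toFun := fun m => (tmul (m : G) g : TS G ⧸ tensorImage N)
      map_one' := by simp [tmul_one_left]
      map_mul' := fun a b => by
        simp only [Subgroup.coe_mul, tmul_mul_left, QuotientGroup.mk_mul]
        rw [(hcomm a b).eq]
        exact congrArg (· * _) (DFunLike.congr_fun (mk_comp_conjMap_of_mem hperf a.2) _) }
  have hf : f = 1 := f.eq_one_of_perfect_of_commute hperf hcomm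
  exact (QuotientGroup.eq_one_iff _).mp (DFunLike.congr_fun hf ⟨n, hn⟩)

lemma mk_tmul_mul_mul (hperf : commutator ↥N = ⊤) (g h : G) {n m : G} (hn : n ∈ N)
    (hm : m ∈ N) :
    (tmul (g * n) (h * m) : TS G ⧸ tensorImage N) = tmul g h := by
  rw [tmul_mul_left, tmul_mul_right g h m, QuotientGroup.mk_mul, QuotientGroup.mk_mul,
    (QuotientGroup.eq_one_iff _).mpr
      (conjMap_mem_tensorImage g (tmul_mem_tensorImage_of_mem_left hperf hn (h * m))),
    (QuotientGroup.eq_one_iff _).mpr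
      (conjMap_mem_tensorImage h (tmul_mem_tensorImage_of_mem_right hperf g hm)),
    one_mul, mul_one]

lemma mk_comp_tmap_of_mk_comp_eq (hperf : commutator ↥N = ⊤) {f : G →* G}
    (hf : (QuotientGroup.mk' N).comp f = QuotientGroup.mk' N) :
    (QuotientGroup.mk' (tensorImage N)).comp (tmap f) = QuotientGroup.mk' _ := by
  have hdiff (x : G) : (f x)⁻¹ * x ∈ N := QuotientGroup.eq.mp (DFunLike.congr_fun hf x)
  refine hom_ext fun a b => ?_
  have h := mk_tmul_mul_mul hperf (f a) (f b) (hdiff a) (hdiff b)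
  rw [mul_inv_cancel_left, mul_inv_cancel_left] at h
  rw [MonoidHom.comp_apply, tmap_tmul]
  exact h.symm

lemma ker_tmap_mk_le_tensorImage (hperf : commutator ↥N = ⊤) (σ : G ⧸ N →* G)
    (hσ : (QuotientGroup.mk' N).comp σ = MonoidHom.id _) :
    (tmap (QuotientGroup.mk' N)).ker ≤ tensorImage N := by
  intro t ht
  have hρ : (QuotientGroup.mk' N).comp (σ.comp (QuotientGroup.mk' N)) = QuotientGroup.mk' N := by
    rw [← MonoidHom.comp_assoc, hσ, MonoidHom.id_comp]
  have h := DFunLike.congr_fun (mk_comp_tmap_of_mk_comp_eq hperf hρ) t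
  rw [MonoidHom.comp_apply, tmap_comp, MonoidHom.comp_apply, ht, map_one, map_one] at h
  exact (QuotientGroup.eq_one_iff t).mp h.symm

end Perfect

end NATensor

open NATensor in
/-- if `N` is a perfect normal subgroup of `G` with a complement, then the
sequence `J(N) → J(G) → J(G/N) → 1` is exact: the map `J(G) → J(G/N)` (restriction of the
map induced by `G → G/N`) is surjective, and its kernel equals the image of `J(N)` under the
map induced by the inclusion `N → G`.  (Topologically:
`π₃(SK(N,1)) → π₃(SK(G,1)) → π₃(SK(G/N,1)) → 0` is exact.) -/
theorem J_exact_of_perfect_normal_complemented (G : Type*) [Group G]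
    (N : Subgroup G) [N.Normal] (hperf : commutator ↥N = ⊤)
    (B : Subgroup G) (hB1 : N ⊔ B = ⊤) (hB2 : N ⊓ B = ⊥) :
    Subgroup.map (tmap (QuotientGroup.mk' N)) (J G) = J (G ⧸ N) ∧
    J G ⊓ MonoidHom.ker (tmap (QuotientGroup.mk' N)) =
      Subgroup.map (tmap N.subtype) (J ↥N) := by
  obtain ⟨σ, hσ⟩ := exists_mk'_comp_eq_id_of_complement N B hB1 hB2
  refine ⟨map_J_eq_of_comp_eq_id _ σ hσ, le_antisymm ?_ ?_⟩
  · rintro t ⟨htJ, htker⟩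
    obtain ⟨u, rfl⟩ := ker_tmap_mk_le_tensorImage hperf σ hσ htker
    exact ⟨u, (tmap_mem_J_iff N.subtype_injective).mp htJ, rfl⟩
  · rintro _ ⟨u, hu, rfl⟩
    refine Subgroup.mem_inf.mpr ⟨map_J_le _ ⟨u, hu, rfl⟩, ?_⟩
    rw [MonoidHom.mem_ker, ← MonoidHom.comp_apply, ← tmap_comp, QuotientGroup.mk'_comp_subtype,
      tmap_one, MonoidHom.one_apply]
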